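/- arXiv:1802.07880 — 3 statements merged into one kernel-verified Lean document; each statement's English description precedes it below -/
import Mathlib

section
/- For every real μ > 0 and every integrable function f : ℝ → ℂ whose support is contained in [0, ∞), the double integral ∫_ℝ ∫_ℝ conj(f(−s)) · (e^{−μ|s−t|}/(2μ)) · f(t) dt ds equals (1/(2μ)) · |∫_{[0,∞)} e^{−μ t} f(t) dt|². In particular this double integral is a nonnegative real number (reflection positivity of the one-dimensional free covariance kernel under the time reflection s ↦ −s). -/
open MeasureTheory ComplexOrder

/-- Reflection positivity of the one-dimensional free covariance kernel
`C_μ(s,t) = e^{−μ|s−t|}/(2μ)` under the time reflection `s ↦ −s`: for `f`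
integrable and supported in `[0, ∞)`, the pairing of `θf` against `C_μ f`
equals `(1/(2μ)) · |∫_{[0,∞)} e^{−μt} f(t) dt|²`, a nonnegative real number. -/
theorem reflection_positivity_free_covariance_dim_one
    (μ : ℝ) (hμ : 0 < μ) (f : ℝ → ℂ)
    (hf : Integrable f) (hsupp : Function.support f ⊆ Set.Ici (0 : ℝ)) :
    (∫ s : ℝ, ∫ t : ℝ,
        (starRingEnd ℂ) (f (-s)) * ((Real.exp (-(μ * |s - t|)) / (2 * μ) : ℝ) : ℂ) * f t)
      = (((1 / (2 * μ)) *
          ‖∫ t in Set.Ici (0 : ℝ), ((Real.exp (-(μ * t)) : ℝ) : ℂ) * f t‖ ^ 2 : ℝ) : ℂ) ∧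
    0 ≤ ∫ s : ℝ, ∫ t : ℝ,
        (starRingEnd ℂ) (f (-s)) * ((Real.exp (-(μ * |s - t|)) / (2 * μ) : ℝ) : ℂ) * f t := by
  set g : ℝ → ℂ := fun t => ((Real.exp (-(μ * t)) : ℝ) : ℂ) * f t with hg
  -- the full-line integral of g equals the half-line integral
  have hIall : ∫ t in Set.Ici (0 : ℝ), g t = ∫ t, g t := by
    refine setIntegral_eq_integral_of_forall_compl_eq_zero ?_
    intro x hx
    have hfx : f x = 0 := by
      by_contra h
      exact hx (hsupp h)
    simp [hg, hfx]
  set I : ℂ := ∫ t, g t with hI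
  -- inner integral computation
  have hinner : ∀ s : ℝ,
      (∫ t : ℝ, (starRingEnd ℂ) (f (-s)) *
          ((Real.exp (-(μ * |s - t|)) / (2 * μ) : ℝ) : ℂ) * f t)
        = (starRingEnd ℂ) (g (-s)) * ((1 / (2 * μ) : ℝ) : ℂ) * I := by
    intro s
    have key : ∀ t : ℝ,
        (starRingEnd ℂ) (f (-s)) * ((Real.exp (-(μ * |s - t|)) / (2 * μ) : ℝ) : ℂ) * f t
          = (starRingEnd ℂ) (g (-s)) * ((1 / (2 * μ) : ℝ) : ℂ) * g t := by
      intro t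
      by_cases hfs : f (-s) = 0
      · simp [hg, hfs]
      by_cases hft : f t = 0
      · simp [hg, hft]
      have hs : (0 : ℝ) ≤ -s := hsupp (Function.mem_support.2 hfs)
      have ht : (0 : ℝ) ≤ t := hsupp (Function.mem_support.2 hft)
      have habs : |s - t| = t - s := by
        rw [abs_of_nonpos (by linarith)]; ring
      have hexp : Real.exp (-(μ * |s - t|))
          = Real.exp (-(μ * -s)) * Real.exp (-(μ * t)) := by
        rw [habs, ← Real.exp_add]; congr 1; ring
      simp only [hg, hexp, map_mul, Complex.conj_ofReal, Complex.ofReal_mul,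
        Complex.ofReal_div, Complex.ofReal_one]
      ring
    calc (∫ t : ℝ, (starRingEnd ℂ) (f (-s)) *
            ((Real.exp (-(μ * |s - t|)) / (2 * μ) : ℝ) : ℂ) * f t)
        = ∫ t : ℝ, (starRingEnd ℂ) (g (-s)) * ((1 / (2 * μ) : ℝ) : ℂ) * g t :=
          integral_congr_ae (Filter.Eventually.of_forall key)
      _ = (starRingEnd ℂ) (g (-s)) * ((1 / (2 * μ) : ℝ) : ℂ) * I := by
          rw [mul_assoc, integral_const_mul, ← mul_assoc]
  have houter : (∫ s : ℝ, ∫ t : ℝ,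
      (starRingEnd ℂ) (f (-s)) * ((Real.exp (-(μ * |s - t|)) / (2 * μ) : ℝ) : ℂ) * f t)
      = (starRingEnd ℂ) I * (((1 / (2 * μ) : ℝ) : ℂ) * I) := by
    calc (∫ s : ℝ, ∫ t : ℝ,
        (starRingEnd ℂ) (f (-s)) * ((Real.exp (-(μ * |s - t|)) / (2 * μ) : ℝ) : ℂ) * f t)
        = ∫ s : ℝ, (starRingEnd ℂ) (g (-s)) * ((1 / (2 * μ) : ℝ) : ℂ) * I :=
          integral_congr_ae (Filter.Eventually.of_forall hinner)
      _ = ∫ s : ℝ, (starRingEnd ℂ) (g (-s)) * (((1 / (2 * μ) : ℝ) : ℂ) * I) := by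
          simp only [mul_assoc]
      _ = (∫ s : ℝ, (starRingEnd ℂ) (g (-s))) * (((1 / (2 * μ) : ℝ) : ℂ) * I) :=
          integral_mul_const _ _
      _ = (starRingEnd ℂ) I * (((1 / (2 * μ) : ℝ) : ℂ) * I) := by
          rw [show (∫ s : ℝ, (starRingEnd ℂ) (g (-s)))
              = ∫ s : ℝ, (starRingEnd ℂ) (g s) from
            integral_neg_eq_self (fun s => (starRingEnd ℂ) (g s)) volume, integral_conj]
  have hval : (∫ s : ℝ, ∫ t : ℝ,
      (starRingEnd ℂ) (f (-s)) * ((Real.exp (-(μ * |s - t|)) / (2 * μ) : ℝ) : ℂ) * f t)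
      = (((1 / (2 * μ)) *
          ‖∫ t in Set.Ici (0 : ℝ), ((Real.exp (-(μ * t)) : ℝ) : ℂ) * f t‖ ^ 2 : ℝ) : ℂ) := by
    rw [houter]
    have : (starRingEnd ℂ) I * I = ((‖I‖ ^ 2 : ℝ) : ℂ) := by
      rw [Complex.conj_mul']; push_cast; ring
    rw [show (starRingEnd ℂ) I * (((1 / (2 * μ) : ℝ) : ℂ) * I)
        = ((1 / (2 * μ) : ℝ) : ℂ) * ((starRingEnd ℂ) I * I) by ring, this]
    rw [show (∫ t in Set.Ici (0 : ℝ), ((Real.exp (-(μ * t)) : ℝ) : ℂ) * f t) = I from hIall]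
    push_cast
    ring
  refine ⟨hval, ?_⟩
  rw [hval]
  rw [Complex.zero_le_real]
  positivity
end

section
/- For every real μ > 0, the function t ↦ e^{−μ|t|} is positive definite on ℝ: for every n, every t : Fin n → ℝ and every c : Fin n → ℂ, the sum ∑_{i,j} conj(c i) · c j · e^{−μ|t i − t j|} is a nonnegative real number. -/
/-!
With `f_s(x) = e^{-μ(s - x)}` for `x ≤ s` and `0` beyond (the kernel representing the stationary
Ornstein–Uhlenbeck process as `∫ f_s dW`), only `x ≤ min s t` contributes to `∫ f_s f_t`, which
gives `⟪f_s, f_t⟫_{L²} = e^{-μ|s-t|} / (2μ)`. Hence the kernel is `2μ` times a Gram matrix in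
`L²(ℝ)`, and `∑ c̄ᵢ cⱼ ⟪vᵢ, vⱼ⟫ = ‖∑ cᵢ vᵢ‖² ≥ 0`.
-/

open ComplexOrder

open MeasureTheory Real Set
open scoped InnerProductSpace ComplexConjugate

lemma sum_conj_mul_mul_inner_nonneg {𝕜 E ι : Type*} [RCLike 𝕜] [NormedAddCommGroup E]
    [InnerProductSpace 𝕜 E] [Fintype ι] (v : ι → E) (c : ι → 𝕜) :
    0 ≤ ∑ i, ∑ j, conj (c i) * c j * ⟪v i, v j⟫_𝕜 := by
  have hgram : ∑ i, ∑ j, conj (c i) * c j * ⟪v i, v j⟫_𝕜 =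
      ⟪∑ i, c i • v i, ∑ j, c j • v j⟫_𝕜 := by
    simp_rw [sum_inner, inner_sum, inner_smul_left, inner_smul_right, mul_assoc]
  rw [hgram, ← inner_self_ofReal_re]
  exact RCLike.ofReal_nonneg.mpr inner_self_nonneg

noncomputable def expIic (μ s : ℝ) : ℝ → ℝ := (Iic s).indicator fun x => exp (-(μ * (s - x)))

lemma expIic_mul_expIic (μ s t x : ℝ) :
    expIic μ s x * expIic μ t x =
      exp (-(μ * (s + t))) * (Iic (min s t)).indicator (fun x => exp (2 * μ * x)) x := by
  by_cases hs : x ≤ s <;> by_cases ht : x ≤ t <;>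
    simp [expIic, indicator, hs, ht, ← exp_add]
  ring_nf

lemma integral_expIic_mul_expIic {μ : ℝ} (hμ : 0 < μ) (s t : ℝ) :
    ∫ x, expIic μ s x * expIic μ t x = exp (-(μ * |s - t|)) / (2 * μ) := by
  have hexp : -(μ * (s + t)) + 2 * μ * min s t = -(μ * |s - t|) := by
    rw [abs_sub_comm, ← max_sub_min_eq_abs, ← min_add_max s t]
    ring
  simp_rw [expIic_mul_expIic, integral_const_mul, integral_indicator measurableSet_Iic,
    integral_exp_mul_Iic (by positivity : 0 < 2 * μ), mul_div_assoc', ← exp_add, hexp]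

lemma memLp_expIic {μ : ℝ} (hμ : 0 < μ) (s : ℝ) : MemLp (expIic μ s) 2 := by
  have hmeas : Measurable (expIic μ s) :=
    (by fun_prop : Measurable fun x => exp (-(μ * (s - x)))).indicator measurableSet_Iic
  rw [memLp_two_iff_integrable_sq hmeas.aestronglyMeasurable]
  simp_rw [sq, expIic_mul_expIic, min_self]
  exact ((integrableOn_exp_mul_Iic (by positivity) s).integrable_indicator
    measurableSet_Iic).const_mul _

noncomputable def expIicLp {μ : ℝ} (hμ : 0 < μ) (s : ℝ) : Lp ℂ 2 (volume : Measure ℝ) :=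
  ((memLp_expIic hμ s).ofReal (K := ℂ)).toLp _

lemma inner_expIicLp {μ : ℝ} (hμ : 0 < μ) (s t : ℝ) :
    ⟪expIicLp hμ s, expIicLp hμ t⟫_ℂ = ((exp (-(μ * |s - t|)) / (2 * μ) : ℝ) : ℂ) := by
  rw [L2.inner_def, ← integral_expIic_mul_expIic hμ, ← integral_complex_ofReal]
  refine integral_congr_ae ?_
  filter_upwards [MemLp.coeFn_toLp ((memLp_expIic hμ s).ofReal (K := ℂ)),
    MemLp.coeFn_toLp ((memLp_expIic hμ t).ofReal (K := ℂ))] with x hs ht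
  rw [expIicLp, expIicLp, hs, ht, RCLike.inner_apply, RCLike.conj_ofReal]
  push_cast
  exact mul_comm _ _

/-- For every `μ > 0`, the function `t ↦ e^{−μ|t|}` is positive definite on `ℝ`:
every Hermitian form `∑_{i,j} conj(c i) · c j · e^{−μ|t i − t j|}` is a
nonnegative real number. -/
theorem exp_neg_abs_posdef (μ : ℝ) (hμ : 0 < μ) :
    ∀ (n : ℕ) (t : Fin n → ℝ) (c : Fin n → ℂ),
      0 ≤ ∑ i : Fin n, ∑ j : Fin n,
        (starRingEnd ℂ) (c i) * c j * ((Real.exp (-(μ * |t i - t j|)) : ℝ) : ℂ) := by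
  intro n t c
  have hkernel : ∀ i j, ((exp (-(μ * |t i - t j|)) : ℝ) : ℂ) =
      (2 * μ : ℂ) * ⟪expIicLp hμ (t i), expIicLp hμ (t j)⟫_ℂ := by
    intro i j
    rw [inner_expIicLp]
    push_cast
    field_simp
  simp_rw [hkernel, mul_left_comm _ (2 * μ : ℂ), ← Finset.mul_sum]
  exact mul_nonneg (by exact_mod_cast (by positivity : (0 : ℝ) ≤ 2 * μ))
    (sum_conj_mul_mul_inner_nonneg _ c)
end

section
/- Let V be a complex vector space, B : V × V → ℂ a hermitian positive semidefinite sesquilinear form, and T : V → V a linear map that is B-symmetric (B(Tx,y) = B(x,Ty) for all x,y), satisfies B(x, Tx) ≥ 0 for all x, and is a B-contraction (B(Tx,Tx) ≤ B(x,x) for all x). Then the induced operator T̂ on the quotient inner product space V/N, where N = {x : B(x,x) = 0}, is well defined, symmetric for the quotient inner product, positive (⟨u, T̂ u⟩ ≥ 0 for all u ∈ V/N), and a contraction (‖T̂ u‖ ≤ ‖u‖ for all u ∈ V/N). -/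
/-!
By Cauchy–Schwarz, `B x x = 0` forces `B x y = 0` for every `y`, so the null set `N` is the
kernel of `B`; in particular it is a submodule and `B` descends to a positive definite
hermitian form on `V ⧸ N`. A `B`-symmetric `T` maps the kernel of `B` into itself, since
`B (T x) y = B x (T y)`, so `T` descends as well, and the three inequalities only have to be
checked on representatives.
-/

open ComplexOrder

namespace LinearMap

section RCLike

variable {𝕜 V : Type*} [RCLike 𝕜] [AddCommGroup V] [Module 𝕜 V] {B : V →ₗ⋆[𝕜] V →ₗ[𝕜] 𝕜}

abbrev IsPosSemidef.toPreInnerProductSpaceCore (hB : B.IsPosSemidef) :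
    PreInnerProductSpace.Core 𝕜 V where
  inner x y := B x y
  conj_inner_symm x y := hB.isSymm.eq y x
  re_inner_nonneg x := (RCLike.nonneg_iff.mp (hB.isNonneg.nonneg x)).1
  add_left x y z := by simp
  smul_left x y r := by simp

theorem IsPosSemidef.apply_eq_zero_of_self_eq_zero (hB : B.IsPosSemidef) {x : V}
    (hx : B x x = 0) (y : V) : B x y = 0 := by
  let _ := hB.toPreInnerProductSpaceCore
  have hcs := InnerProductSpace.Core.inner_mul_inner_self_le (𝕜 := 𝕜) x y
  change ‖B x y‖ * ‖B y x‖ ≤ RCLike.re (B x x) * RCLike.re (B y y) at hcs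
  rw [hx, ← hB.isSymm.eq x y, RCLike.norm_conj, map_zero, zero_mul] at hcs
  exact norm_eq_zero.mp (mul_self_eq_zero.mp (le_antisymm hcs (mul_self_nonneg _)))

theorem IsPosSemidef.mem_ker_iff (hB : B.IsPosSemidef) {x : V} : x ∈ ker B ↔ B x x = 0 :=
  ⟨fun hx => by rw [mem_ker.mp hx, zero_apply],
    fun hx => mem_ker.mpr (ext (hB.apply_eq_zero_of_self_eq_zero hx))⟩

theorem IsPosSemidef.liftQ₂ (hB : B.IsPosSemidef) {N : Submodule 𝕜 V} (hN : N ≤ ker B) :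
    (hB.isSymm.isRefl.liftQ₂ B N hN).IsPosSemidef where
  eq := by simpa [Submodule.Quotient.forall] using hB.isSymm.eq
  nonneg := by simpa [Submodule.Quotient.forall] using hB.isNonneg.nonneg

theorem IsPosSemidef.liftQ₂_ker_self_eq_zero_iff (hB : B.IsPosSemidef) (u : V ⧸ ker B) :
    hB.isSymm.isRefl.liftQ₂ B (ker B) le_rfl u u = 0 ↔ u = 0 := by
  induction u using Submodule.Quotient.induction_on
  rw [liftQ₂_mk, Submodule.Quotient.mk_eq_zero, hB.mem_ker_iff]

end RCLike

theorem ker_le_comap_ker {R S M P : Type*} [CommSemiring R] [CommSemiring S] [AddCommMonoid M]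
    [AddCommMonoid P] [Module R M] [Module S P] {I₁ I₂ : R →+* S}
    {B : M →ₛₗ[I₁] M →ₛₗ[I₂] P} {T : M →ₗ[R] M} (hT : ∀ x y, B (T x) y = B x (T y)) :
    ker B ≤ (ker B).comap T := fun x hx =>
  mem_ker.mpr (ext fun y => by simp only [hT, mem_ker.mp hx, zero_apply])

end LinearMap

/-- Osterwalder–Schrader quantization of a transfer matrix: if `T` is a
`B`-symmetric linear map with `B(x,Tx) ≥ 0` and `B(Tx,Tx) ≤ B(x,x)` for a
hermitian positive semidefinite sesquilinear form `B`, then the induced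
operator `T̂` on the quotient inner product space `V/N`,
`N = {x | B(x,x) = 0}`, is well defined, symmetric, positive, and a
contraction for the quotient inner product (the descended form `B'`). -/
theorem os_quantization_transfer_matrix
    (V : Type*) [AddCommGroup V] [Module ℂ V]
    (B : V →ₗ⋆[ℂ] V →ₗ[ℂ] ℂ)
    (hherm : ∀ x y : V, B y x = (starRingEnd ℂ) (B x y))
    (hpos : ∀ x : V, 0 ≤ B x x)
    (T : V →ₗ[ℂ] V)
    (hsym : ∀ x y : V, B (T x) y = B x (T y))
    (hTpos : ∀ x : V, 0 ≤ B x (T x))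
    (hcontr : ∀ x : V, B (T x) (T x) ≤ B x x) :
    ∃ N : Submodule ℂ V, (N : Set V) = {x : V | B x x = 0} ∧
      ∃ B' : (V ⧸ N) →ₗ⋆[ℂ] (V ⧸ N) →ₗ[ℂ] ℂ,
        (∀ x y : V, B' (Submodule.Quotient.mk x) (Submodule.Quotient.mk y) = B x y) ∧
        (∀ u v : V ⧸ N, B' v u = (starRingEnd ℂ) (B' u v)) ∧
        (∀ u : V ⧸ N, 0 ≤ B' u u) ∧
        (∀ u : V ⧸ N, B' u u = 0 → u = 0) ∧
        ∃ T' : (V ⧸ N) →ₗ[ℂ] (V ⧸ N),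
          (∀ x : V, T' (Submodule.Quotient.mk x) = Submodule.Quotient.mk (T x)) ∧
          (∀ u v : V ⧸ N, B' (T' u) v = B' u (T' v)) ∧
          (∀ u : V ⧸ N, 0 ≤ B' u (T' u)) ∧
          (∀ u : V ⧸ N, B' (T' u) (T' u) ≤ B' u u) := by
  have hB : B.IsPosSemidef := ⟨⟨fun x y => (hherm x y).symm⟩, ⟨hpos⟩⟩
  have hB' := hB.liftQ₂ le_rfl
  refine ⟨LinearMap.ker B, Set.ext fun x => hB.mem_ker_iff, _, LinearMap.liftQ₂_mk _ _,
    fun u v => (hB'.isSymm.eq u v).symm, hB'.isNonneg.nonneg,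
    fun u => (hB.liftQ₂_ker_self_eq_zero_iff u).mp,
    (LinearMap.ker B).mapQ _ T (LinearMap.ker_le_comap_ker hsym), fun _ => rfl, ?_, ?_, ?_⟩
  · simpa [Submodule.Quotient.forall] using hsym
  · simpa [Submodule.Quotient.forall] using hTpos
  · simpa [Submodule.Quotient.forall] using hcontr
end
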